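/- If the almost sure theory T_p admits a complete set of completions {σ_1, σ_2, …} with limiting probabilities p_i = lim P(σ_i) satisfying ∑ p_i = 1, then p is a convergence law, and for every first-order sentence A, lim_{n→∞} P(A) = ∑_{i ∈ S(A)} p_i where S(A) = {i : T_p ∪ {σ_i} ⊨ A}. -/

import Mathlib

open Finset Filter

noncomputable section
open scoped Classical

/-- The type of potential edges of a `(d+1)`-uniform hypergraph on `n` vertices. -/
abbrev Edge (d n : ℕ) := {s : Finset (Fin n) // s.card = d + 1}

/-- Probability of an event in the binomial random `(d+1)`-uniform hypergraph `G^{d+1}(n,p)`. -/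
def hprob (d n : ℕ) (p : ℝ) (P : Finset (Edge d n) → Prop) : ℝ :=
  ∑ H : Finset (Edge d n),
    if P H then p ^ H.card * (1 - p) ^ (Fintype.card (Edge d n) - H.card) else 0

/-- Expectation of a random variable on `G^{d+1}(n,p)`. -/
def hexp (d n : ℕ) (p : ℝ) (X : Finset (Edge d n) → ℝ) : ℝ :=
  ∑ H : Finset (Edge d n),
    p ^ H.card * (1 - p) ^ (Fintype.card (Edge d n) - H.card) * X H

/-- The first-order language of `(d+1)`-uniform hypergraphs: one `(d+1)`-ary relation. -/
def hyperLang (d : ℕ) : FirstOrder.Language :=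
  { Functions := fun _ => Empty, Relations := fun k => PLift (k = d + 1) }

/-- The canonical `hyperLang`-structure on `Fin n` induced by an edge set. -/
def hyperStructure (d n : ℕ) (H : Finset (Edge d n)) : (hyperLang d).Structure (Fin n) where
  funMap := fun f _ => f.elim
  RelMap := fun _ x => ∃ e ∈ H, (e : Finset (Fin n)).val = Multiset.map x Finset.univ.val

/-- Satisfaction of a first-order sentence by a finite hypergraph. -/
def hsat {d n : ℕ} (H : Finset (Edge d n)) (φ : (hyperLang d).Sentence) : Prop :=
  @FirstOrder.Language.Sentence.Realize (hyperLang d) (Fin n) (hyperStructure d n H) φ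

/-- The probability that `G^{d+1}(n,p(n))` satisfies a first-order sentence. -/
def psent (d : ℕ) (p : ℕ → ℝ) (φ : (hyperLang d).Sentence) (n : ℕ) : ℝ :=
  hprob d n (p n) (fun H => hsat H φ)

/-- The almost sure theory `T_p`. -/
def almostSureTheory (d : ℕ) (p : ℕ → ℝ) : (hyperLang d).Theory :=
  {φ | Tendsto (psent d p φ) atTop (nhds 1)}

open FirstOrder FirstOrder.Language Topology

/-!
Compactness and a union bound show that `T_p` is closed under consequence, so sentences that
`T_p` proves equivalent have asymptotically equal probabilities. For finite `I` the `σ i` are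
almost surely pairwise exclusive, whence `P(⋁_{i ∈ I} σ i) → ∑_{i ∈ I} q i`; and by completeness
of each `T_p ∪ {σ i}`, `A ∧ ⋁_{i ∈ I} σ i` is `T_p`-equivalent to `⋁_{i ∈ I ∩ S(A)} σ i`.
What is left of `A` has probability at most `1 - P(⋁_{i ∈ I} σ i) → 1 - ∑_{i ∈ I} q i`,
which is small for large `I` since `∑ q i = 1`.
-/

theorem tendsto_of_forall_bounds {α ι κ : Type*} [TopologicalSpace α] [LinearOrder α]
    [OrderTopology α] {f : Filter ι} {F : Filter κ} {a : ι → α} {L : α}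
    (lower upper : κ → ι → α) (lo hi : κ → α)
    (h_lower : ∀ k i, lower k i ≤ a i) (h_upper : ∀ k i, a i ≤ upper k i)
    (h_lo : ∀ k, Tendsto (lower k) f (𝓝 (lo k))) (h_hi : ∀ k, Tendsto (upper k) f (𝓝 (hi k)))
    (hlo : Tendsto lo F (𝓝 L)) (hhi : Tendsto hi F (𝓝 L)) [F.NeBot] :
    Tendsto a f (𝓝 L) := by
  refine tendsto_order.2 ⟨fun b hb => ?_, fun b hb => ?_⟩
  · obtain ⟨k, hk⟩ := (hlo.eventually (lt_mem_nhds hb)).exists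
    filter_upwards [(h_lo k).eventually (lt_mem_nhds hk)] with i hi using hi.trans_le (h_lower k i)
  · obtain ⟨k, hk⟩ := (hhi.eventually (gt_mem_nhds hb)).exists
    filter_upwards [(h_hi k).eventually (gt_mem_nhds hk)] with i hi using (h_upper k i).trans_lt hi

section Probability

variable {d n : ℕ} {p : ℝ}

theorem hprob_congr {P Q : Finset (Edge d n) → Prop} (h : ∀ H, P H ↔ Q H) :
    hprob d n p P = hprob d n p Q := by
  simp only [hprob, h]

theorem hprob_true : hprob d n p (fun _ => True) = 1 := by
  have h := Finset.prod_add (fun _ : Edge d n => p) (fun _ => 1 - p) Finset.univ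
  simp only [Finset.prod_const, add_sub_cancel, one_pow, Finset.powerset_univ,
    Finset.card_sdiff_of_subset (Finset.subset_univ _), Finset.card_univ] at h
  simp only [hprob, if_true]
  exact h.symm

theorem hprob_eq_add_and_not (P Q : Finset (Edge d n) → Prop) :
    hprob d n p P = hprob d n p (fun H => P H ∧ Q H) + hprob d n p (fun H => P H ∧ ¬ Q H) := by
  simp only [hprob, ← Finset.sum_add_distrib]
  refine Finset.sum_congr rfl fun H _ => ?_
  by_cases hP : P H <;> by_cases hQ : Q H <;> simp [hP, hQ]

theorem hprob_or_add_and (P Q : Finset (Edge d n) → Prop) :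
    hprob d n p (fun H => P H ∨ Q H) + hprob d n p (fun H => P H ∧ Q H)
      = hprob d n p P + hprob d n p Q := by
  simp only [hprob, ← Finset.sum_add_distrib]
  refine Finset.sum_congr rfl fun H _ => ?_
  by_cases hP : P H <;> by_cases hQ : Q H <;> simp [hP, hQ]

theorem hprob_not (P : Finset (Edge d n) → Prop) :
    hprob d n p (fun H => ¬ P H) = 1 - hprob d n p P := by
  have h := hprob_eq_add_and_not (d := d) (n := n) (p := p) (fun _ => True) P
  simp only [true_and, hprob_true] at h
  linarith

variable (h0 : 0 ≤ p) (h1 : p ≤ 1)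
include h0 h1

theorem hprob_nonneg (P : Finset (Edge d n) → Prop) : 0 ≤ hprob d n p P :=
  Finset.sum_nonneg fun H _ => by
    split_ifs
    · exact mul_nonneg (pow_nonneg h0 _) (pow_nonneg (by linarith) _)
    · exact le_rfl

theorem hprob_mono {P Q : Finset (Edge d n) → Prop} (h : ∀ H, P H → Q H) :
    hprob d n p P ≤ hprob d n p Q := by
  calc hprob d n p P = hprob d n p (fun H => Q H ∧ P H) :=
        hprob_congr fun H => ⟨fun hP => ⟨h H hP, hP⟩, And.right⟩
    _ ≤ hprob d n p Q := by
        rw [hprob_eq_add_and_not Q P]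
        exact le_add_of_nonneg_right (hprob_nonneg h0 h1 _)

theorem hprob_exists_le_sum {ι : Type*} (I : Finset ι) (E : ι → Finset (Edge d n) → Prop) :
    hprob d n p (fun H => ∃ i ∈ I, E i H) ≤ ∑ i ∈ I, hprob d n p (E i) := by
  induction I using Finset.induction_on with
  | empty => simp [hprob]
  | insert a I ha ih =>
    have h := hprob_or_add_and (d := d) (n := n) (p := p) (E a) (fun H => ∃ i ∈ I, E i H)
    rw [Finset.sum_insert ha, hprob_congr fun H => Finset.exists_mem_insert a I (E · H)]
    linarith [hprob_nonneg h0 h1 fun H => E a H ∧ ∃ i ∈ I, E i H]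

end Probability

section Completions

variable {L : Language} {T : L.Theory} {ι : Type*}

def sentenceSup (I : Finset ι) (σ : ι → L.Sentence) : L.Sentence :=
  BoundedFormula.iSup fun i : I => σ i

theorem realize_sentenceSup {M : Type*} [L.Structure M] (I : Finset ι) (σ : ι → L.Sentence) :
    M ⊨ sentenceSup I σ ↔ ∃ i ∈ I, M ⊨ σ i := by
  simp [sentenceSup, Sentence.Realize, Formula.Realize]

theorem models_not_sentenceSup_empty (σ : ι → L.Sentence) :
    T ⊨ᵇ (sentenceSup ∅ σ).not :=
  Theory.models_sentence_iff.2 fun M => by simp [realize_sentenceSup]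

theorem models_not_inf_sentenceSup {σ : ι → L.Sentence} {a : ι} {I : Finset ι}
    (h : ∀ j ∈ I, T ⊨ᵇ (σ a ⊓ σ j).not) : T ⊨ᵇ (σ a ⊓ sentenceSup I σ).not := by
  refine Theory.models_sentence_iff.2 fun M => ?_
  simp only [Sentence.realize_not, Sentence.realize_inf, realize_sentenceSup, not_and,
    not_exists]
  intro ha j hj hj'
  exact (Sentence.realize_not M).1 ((h j hj).realize_sentence M)
    ((Sentence.realize_inf M).2 ⟨ha, hj'⟩)

theorem models_inf_sentenceSup_iff {σ : ι → L.Sentence}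
    (hcomp : ∀ i, (insert (σ i) T).IsComplete) (A : L.Sentence) (I : Finset ι) :
    T ⊨ᵇ (sentenceSup (I.filter fun i => insert (σ i) T ⊨ᵇ A) σ).iff
      (A ⊓ sentenceSup I σ) := by
  refine Theory.models_sentence_iff.2 fun M => ?_
  simp only [Sentence.realize_iff, Sentence.realize_inf, realize_sentenceSup, Finset.mem_filter]
  have hA : ∀ i, M ⊨ σ i → (M ⊨ A ↔ insert (σ i) T ⊨ᵇ A) := fun i hi =>
    have : M ⊨ insert (σ i) T := Theory.model_insert_iff.2 ⟨hi, M.is_model⟩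
    (hcomp i).realize_sentence_iff A M
  constructor
  · rintro ⟨i, ⟨hI, hiA⟩, hi⟩
    exact ⟨(hA i hi).2 hiA, i, hI, hi⟩
  · rintro ⟨hMA, i, hI, hi⟩
    exact ⟨i, ⟨hI, (hA i hi).1 hMA⟩, hi⟩

theorem models_iff_comm {φ ψ : L.Sentence} (h : T ⊨ᵇ φ.iff ψ) : T ⊨ᵇ ψ.iff φ :=
  Theory.models_sentence_iff.2 fun M => by
    simpa only [Sentence.realize_iff, iff_comm] using Theory.models_sentence_iff.1 h M

theorem models_not_inf_not_of_models_iff {φ ψ : L.Sentence} (h : T ⊨ᵇ φ.iff ψ) :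
    T ⊨ᵇ (φ ⊓ ψ.not).not :=
  Theory.models_sentence_iff.2 fun M => by
    have := Theory.models_sentence_iff.1 h M
    simp only [Sentence.realize_iff, Sentence.realize_not, Sentence.realize_inf] at this ⊢
    tauto

end Completions

section RandomHypergraph

variable {d : ℕ}

theorem hsat_not {n : ℕ} (H : Finset (Edge d n)) (φ : (hyperLang d).Sentence) :
    hsat H φ.not ↔ ¬ hsat H φ :=
  @Sentence.realize_not _ _ (hyperStructure d n H) _

theorem hsat_inf {n : ℕ} (H : Finset (Edge d n)) (φ ψ : (hyperLang d).Sentence) :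
    hsat H (φ ⊓ ψ) ↔ hsat H φ ∧ hsat H ψ :=
  @Sentence.realize_inf _ _ (hyperStructure d n H) _ _

theorem hsat_sup {n : ℕ} (H : Finset (Edge d n)) (φ ψ : (hyperLang d).Sentence) :
    hsat H (φ ⊔ ψ) ↔ hsat H φ ∨ hsat H ψ :=
  @Sentence.realize_sup _ _ (hyperStructure d n H) _ _

theorem hsat_sentenceSup {n : ℕ} (H : Finset (Edge d n)) {ι : Type*} (I : Finset ι)
    (σ : ι → (hyperLang d).Sentence) : hsat H (sentenceSup I σ) ↔ ∃ i ∈ I, hsat H (σ i) :=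
  @realize_sentenceSup _ _ _ (hyperStructure d n H) I σ

variable {p : ℕ → ℝ} (n : ℕ)

theorem psent_not (φ : (hyperLang d).Sentence) : psent d p φ.not n = 1 - psent d p φ n := by
  rw [psent, hprob_congr (hsat_not · φ), hprob_not, psent]

theorem psent_eq_add_inf_not (φ ψ : (hyperLang d).Sentence) :
    psent d p φ n = psent d p (φ ⊓ ψ) n + psent d p (φ ⊓ ψ.not) n := by
  simp only [psent, hsat_inf, hsat_not]
  exact hprob_eq_add_and_not _ _

theorem psent_inf_comm (φ ψ : (hyperLang d).Sentence) :
    psent d p (φ ⊓ ψ) n = psent d p (ψ ⊓ φ) n :=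
  hprob_congr fun H => by simp only [hsat_inf, and_comm]

theorem psent_sup_add_inf (φ ψ : (hyperLang d).Sentence) :
    psent d p (φ ⊔ ψ) n + psent d p (φ ⊓ ψ) n = psent d p φ n + psent d p ψ n := by
  simp only [psent, hsat_sup, hsat_inf]
  exact hprob_or_add_and _ _

variable (hp : ∀ n, 0 ≤ p n ∧ p n ≤ 1)
include hp

theorem psent_nonneg (φ : (hyperLang d).Sentence) : 0 ≤ psent d p φ n :=
  hprob_nonneg (hp n).1 (hp n).2 _

theorem psent_inf_le (φ ψ : (hyperLang d).Sentence) : psent d p (φ ⊓ ψ) n ≤ psent d p φ n :=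
  hprob_mono (hp n).1 (hp n).2 fun H h => ((hsat_inf H φ ψ).1 h).1

theorem psent_le_inf_add_one_sub (φ ψ : (hyperLang d).Sentence) :
    psent d p φ n ≤ psent d p (φ ⊓ ψ) n + (1 - psent d p ψ n) := by
  have h := psent_inf_le n hp ψ.not φ
  rw [psent_inf_comm, psent_not] at h
  linarith [psent_eq_add_inf_not (p := p) n φ ψ]

end RandomHypergraph

section AlmostSureTheory

variable {d : ℕ} {p : ℕ → ℝ} (hp : ∀ n, 0 ≤ p n ∧ p n ≤ 1)
include hp

theorem mem_almostSureTheory_of_models {φ : (hyperLang d).Sentence}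
    (h : almostSureTheory d p ⊨ᵇ φ) : φ ∈ almostSureTheory d p := by
  obtain ⟨T₀, hT₀, hφ⟩ := Theory.models_iff_finset_models.1 h
  have hfail : ∀ n ≥ 1, 1 - psent d p φ n ≤ ∑ χ ∈ T₀, (1 - psent d p χ n) := by
    intro n hn
    simp_rw [← psent_not]
    simp only [psent]
    refine le_trans (hprob_mono (hp n).1 (hp n).2 fun H hH => ?_)
      (hprob_exists_le_sum (hp n).1 (hp n).2 T₀ fun χ H => hsat H χ.not)
    by_contra hall
    simp only [hsat_not, not_exists, not_and, not_not] at hall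
    let := hyperStructure d n H
    have : Nonempty (Fin n) := ⟨⟨0, hn⟩⟩
    have : Fin n ⊨ (T₀ : (hyperLang d).Theory) := (Theory.model_iff _).2 hall
    exact (hsat_not H φ).1 hH (hφ.realize_sentence (Fin n))
  have hfail_lim : Tendsto (fun n => ∑ χ ∈ T₀, (1 - psent d p χ n)) atTop (𝓝 0) := by
    simpa using tendsto_finsetSum T₀ fun χ hχ =>
      (tendsto_const_nhds (x := (1 : ℝ))).sub (hT₀ hχ : Tendsto (psent d p χ) atTop (𝓝 1))
  have : Tendsto (fun n => 1 - psent d p φ n) atTop (𝓝 0) :=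
    squeeze_zero' (Eventually.of_forall fun n => by
        simpa [psent_not] using psent_nonneg n hp φ.not)
      (eventually_atTop.2 ⟨1, hfail⟩) hfail_lim
  show Tendsto (psent d p φ) atTop (𝓝 1)
  simpa using (tendsto_const_nhds (x := (1 : ℝ))).sub this

theorem tendsto_psent_zero_of_models_not {φ : (hyperLang d).Sentence}
    (h : almostSureTheory d p ⊨ᵇ φ.not) : Tendsto (psent d p φ) atTop (𝓝 0) := by
  have h1 : Tendsto (psent d p φ.not) atTop (𝓝 1) := mem_almostSureTheory_of_models hp h
  simpa [psent_not] using (tendsto_const_nhds (x := (1 : ℝ))).sub h1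

theorem tendsto_psent_of_models_iff {φ ψ : (hyperLang d).Sentence} {x : ℝ}
    (h : almostSureTheory d p ⊨ᵇ φ.iff ψ) (hφ : Tendsto (psent d p φ) atTop (𝓝 x)) :
    Tendsto (psent d p ψ) atTop (𝓝 x) := by
  have hdiff := (tendsto_psent_zero_of_models_not hp (models_not_inf_not_of_models_iff h)).sub
    (tendsto_psent_zero_of_models_not hp (models_not_inf_not_of_models_iff (models_iff_comm h)))
  convert! hφ.sub hdiff using 1
  · funext n
    rw [psent_eq_add_inf_not n φ ψ, psent_eq_add_inf_not n ψ φ, psent_inf_comm n φ ψ]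
    ring
  · simp

theorem tendsto_psent_sentenceSup {σ : ℕ → (hyperLang d).Sentence} {q : ℕ → ℝ}
    (hexcl : ∀ i j, i ≠ j → almostSureTheory d p ⊨ᵇ (σ i ⊓ σ j).not)
    (hlim : ∀ i, Tendsto (psent d p (σ i)) atTop (𝓝 (q i))) (I : Finset ℕ) :
    Tendsto (psent d p (sentenceSup I σ)) atTop (𝓝 (∑ i ∈ I, q i)) := by
  induction I using Finset.induction_on with
  | empty => simpa using tendsto_psent_zero_of_models_not hp (models_not_sentenceSup_empty σ)
  | insert a I ha ih =>
    have hsplit : ∀ n, psent d p (sentenceSup (insert a I) σ) n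
        = psent d p (σ a) n + psent d p (sentenceSup I σ) n
          - psent d p (σ a ⊓ sentenceSup I σ) n := fun n => by
      rw [← psent_sup_add_inf, add_sub_cancel_right]
      exact hprob_congr fun H => by
        simp only [hsat_sentenceSup, hsat_sup, Finset.exists_mem_insert]
    have hoverlap := tendsto_psent_zero_of_models_not hp (models_not_inf_sentenceSup
      fun j hj => hexcl a j (ne_of_mem_of_not_mem hj ha).symm)
    have h := ((hlim a).add ih).sub hoverlap
    rw [sub_zero, ← Finset.sum_insert ha] at h
    exact h.congr fun n => (hsplit n).symm

end AlmostSureTheory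

/-- If the almost sure theory `T_p` admits a complete set of completions `σ_i` with limiting
probabilities `q_i` summing to `1`, then `p` is a convergence law and for every sentence `A`
the probability converges to the sum of the `q_i` over those `i` with `T_p ∪ {σ_i} ⊨ A`. -/
theorem stmt_19 (d : ℕ) (p : ℕ → ℝ) (hp : ∀ n, 0 ≤ p n ∧ p n ≤ 1)
    (σ : ℕ → (hyperLang d).Sentence) (q : ℕ → ℝ)
    (hcomp : ∀ i, (insert (σ i) (almostSureTheory d p)).IsComplete)
    (hexcl : ∀ i j, i ≠ j → (almostSureTheory d p) ⊨ᵇ (σ i ⊓ σ j).not)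
    (hlim : ∀ i, Tendsto (psent d p (σ i)) atTop (nhds (q i)))
    (hsum : ∑' i, q i = 1) :
    ∀ A : (hyperLang d).Sentence,
      Tendsto (psent d p A) atTop
        (nhds (∑' i, if insert (σ i) (almostSureTheory d p) ⊨ᵇ A then q i else 0)) := by
  intro A
  set r := fun i => if insert (σ i) (almostSureTheory d p) ⊨ᵇ A then q i else 0
  have hq_nonneg : ∀ i, 0 ≤ q i := fun i => ge_of_tendsto' (hlim i) fun n => psent_nonneg n hp _
  have hq_summable : Summable q := by
    by_contra h
    simp [tsum_eq_zero_of_not_summable h] at hsum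
  have hq : Tendsto (fun I : Finset ℕ => ∑ i ∈ I, q i) atTop (𝓝 1) :=
    hsum ▸ hq_summable.hasSum
  have hr : Tendsto (fun I : Finset ℕ => ∑ i ∈ I, r i) atTop (𝓝 (∑' i, r i)) :=
    (Summable.of_nonneg_of_le
      (fun i => by simp only [r]; split_ifs <;> simp [hq_nonneg i])
      (fun i => by simp only [r]; split_ifs <;> simp [hq_nonneg i]) hq_summable).hasSum
  have hsup := tendsto_psent_sentenceSup hp hexcl hlim
  have hA_sup : ∀ I, Tendsto (psent d p (A ⊓ sentenceSup I σ)) atTop (𝓝 (∑ i ∈ I, r i)) :=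
    fun I => by
      have h := tendsto_psent_of_models_iff hp (models_inf_sentenceSup_iff hcomp A I) (hsup _)
      rwa [Finset.sum_filter] at h
  refine tendsto_of_forall_bounds (F := (atTop : Filter (Finset ℕ)))
    (fun I => psent d p (A ⊓ sentenceSup I σ))
    (fun I n => psent d p (A ⊓ sentenceSup I σ) n + (1 - psent d p (sentenceSup I σ) n))
    (fun I => ∑ i ∈ I, r i) (fun I => ∑ i ∈ I, r i + (1 - ∑ i ∈ I, q i))
    (fun I n => psent_inf_le n hp _ _) (fun I n => psent_le_inf_add_one_sub n hp _ _)
    hA_sup (fun I => (hA_sup I).add (tendsto_const_nhds.sub (hsup I))) hr ?_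
  simpa using hr.add ((tendsto_const_nhds (x := (1 : ℝ))).sub hq)
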